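/- Fix a packet size d > 0 and SNRs γ_b > γ_e > 0, and define ε_LF(m) = Q(ω_b(m))·Q(ω_e(m)) + (1 − Q(ω_e(m))) as above, where ω_b, ω_e are the FBL auxiliary functions with parameters (d, γ_b) and (d, γ_e). Then the secrecy effective throughput τ_LF(m) = (d/m)·(1 − ε_LF(m)) is quasiconcave in m on the interval [d / C(γ_b), d / C(γ_e)]. -/

import Mathlib

/-!
Write `m = t ^ 2`. The throughput is `d * N t / t ^ 2` with `N = Q(ω_e) * (1 - Q(ω_b))`, so its
derivative has the sign of `G t = t * N' t - 2 * N t`. On the interval `ω_e ≤ 0 ≤ ω_b`, and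
from `Q' = -φ`, `φ' x = -x φ x` and the concavity of `ω_b` in `t` one checks that `G' < 0` at every
zero of `G`. So `G` changes sign at most once, from `+` to `-`, and the throughput first increases
and then decreases.
-/

/-- The Gaussian Q-function `Q(x) = ∫ₓ^∞ (1/√(2π)) e^{−t²/2} dt`. -/
noncomputable def gaussianQ (x : ℝ) : ℝ :=
  ∫ t in Set.Ioi x, (Real.sqrt (2 * Real.pi))⁻¹ * Real.exp (-t ^ 2 / 2)

/-- Shannon capacity `C(γ) = log₂(1+γ)`. -/
noncomputable def Cap (γ : ℝ) : ℝ := Real.logb 2 (1 + γ)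

/-- Channel dispersion `V(γ) = 1 − (1+γ)^{−2}`. -/
noncomputable def Vdisp (γ : ℝ) : ℝ := 1 - ((1 + γ) ^ 2)⁻¹

/-- The finite-blocklength auxiliary function
`ω(m,γ) = √(m / V(γ)) · (C(γ) − d/m) · ln 2`. -/
noncomputable def ωfbl (d γ m : ℝ) : ℝ :=
  Real.sqrt (m / Vdisp γ) * (Cap γ - d / m) * Real.log 2

open MeasureTheory ProbabilityTheory Real Set Filter Topology
open scoped NNReal

lemma hasDerivAt_gaussianPDFReal (μ : ℝ) (v : ℝ≥0) (x : ℝ) :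
    HasDerivAt (gaussianPDFReal μ v) (-((x - μ) / v) * gaussianPDFReal μ v x) x := by
  have h : HasDerivAt (fun x => -(x - μ) ^ 2 / (2 * v)) (-((x - μ) / v)) x :=
    ((((hasDerivAt_id x).sub_const μ).pow 2).neg.div_const (2 * (v : ℝ))).congr_deriv
      (by simp only [id, Nat.cast_ofNat]; ring)
  rw [gaussianPDFReal_def]
  exact (h.exp.const_mul _).congr_deriv (by ring)

lemma continuous_gaussianPDFReal (μ : ℝ) (v : ℝ≥0) : Continuous (gaussianPDFReal μ v) :=
  continuous_iff_continuousAt.2 fun x => (hasDerivAt_gaussianPDFReal μ v x).continuousAt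

lemma gaussianQ_eq_setIntegral (x : ℝ) : gaussianQ x = ∫ t in Ioi x, gaussianPDFReal 0 1 t := by
  simp [gaussianQ, gaussianPDFReal]

lemma setIntegral_gaussianPDFReal_pos {s : Set ℝ} (h : 0 < volume s) :
    0 < ∫ t in s, gaussianPDFReal 0 1 t := by
  rw [setIntegral_pos_iff_support_of_nonneg_ae (ae_of_all _ (gaussianPDFReal_nonneg 0 1))
    (integrable_gaussianPDFReal 0 1).integrableOn]
  have : Function.support (gaussianPDFReal 0 1) = univ :=
    Function.support_eq_univ fun t => (gaussianPDFReal_pos 0 1 t one_ne_zero).ne'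
  rwa [this, univ_inter]

lemma gaussianQ_pos (x : ℝ) : 0 < gaussianQ x := by
  rw [gaussianQ_eq_setIntegral]
  exact setIntegral_gaussianPDFReal_pos (by simp)

lemma gaussianQ_lt_one (x : ℝ) : gaussianQ x < 1 := by
  have hφ := integrable_gaussianPDFReal 0 1
  have hsplit := intervalIntegral.integral_Iic_add_Ioi (b := x) hφ.integrableOn hφ.integrableOn
  rw [integral_gaussianPDFReal_eq_one 0 one_ne_zero, ← gaussianQ_eq_setIntegral] at hsplit
  linarith [setIntegral_gaussianPDFReal_pos (s := Iic x) (by simp)]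

lemma hasDerivAt_gaussianQ (x : ℝ) : HasDerivAt gaussianQ (-gaussianPDFReal 0 1 x) x := by
  have hφ := integrable_gaussianPDFReal 0 1
  have h : gaussianQ = fun y => gaussianQ x - ∫ t in x..y, gaussianPDFReal 0 1 t := by
    funext y
    rw [gaussianQ_eq_setIntegral, gaussianQ_eq_setIntegral,
      ← intervalIntegral.integral_Ioi_sub_Ioi' hφ.integrableOn hφ.integrableOn, sub_sub_cancel]
  rw [h]
  exact (intervalIntegral.integral_hasDerivAt_right hφ.intervalIntegrable
    (stronglyMeasurable_gaussianPDFReal 0 1).stronglyMeasurableAtFilter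
    (continuous_gaussianPDFReal 0 1).continuousAt).const_sub _

lemma HasDerivAt.gaussianQ_comp {u : ℝ → ℝ} {u' t : ℝ} (hu : HasDerivAt u u' t) :
    HasDerivAt (fun t => gaussianQ (u t)) (-(gaussianPDFReal 0 1 (u t) * u')) t :=
  ((hasDerivAt_gaussianQ (u t)).comp t hu).congr_deriv (neg_mul _ _)

lemma HasDerivAt.gaussianPDFReal_comp_mul {u u₁ : ℝ → ℝ} {u₂ t : ℝ} (hu : HasDerivAt u (u₁ t) t)
    (hu₁ : HasDerivAt u₁ u₂ t) :
    HasDerivAt (fun t => gaussianPDFReal 0 1 (u t) * u₁ t)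
      (gaussianPDFReal 0 1 (u t) * (u₂ - u t * u₁ t ^ 2)) t :=
  (((hasDerivAt_gaussianPDFReal 0 1 (u t)).comp t hu).mul hu₁).congr_deriv
    (by simp only [Function.comp_apply, NNReal.coe_one, sub_zero, div_one]; ring)

-- `t ^ 3` times the derivative of `N t / t ^ 2`
noncomputable def critNumerator (N : ℝ → ℝ) (t : ℝ) : ℝ := t * deriv N t - 2 * N t

lemma hasDerivAt_critNumerator {N N₁ : ℝ → ℝ} {N₂ t : ℝ} (hN : ∀ᶠ s in 𝓝 t, HasDerivAt N (N₁ s) s)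
    (hN₁ : HasDerivAt N₁ N₂ t) : HasDerivAt (critNumerator N) (t * N₂ - N₁ t) t := by
  have hderiv : deriv N =ᶠ[𝓝 t] N₁ := hN.mono fun s hs => hs.deriv
  exact (((hasDerivAt_id t).mul (hN₁.congr_of_eventuallyEq hderiv)).sub
    (hN.self_of_nhds.const_mul 2)).congr_deriv (by rw [hderiv.eq_of_nhds]; simp only [id]; ring)

lemma critNumerator_eq {N : ℝ → ℝ} {N₁ t : ℝ} (hN : HasDerivAt N N₁ t) :
    critNumerator N t = t * N₁ - 2 * N t := by
  rw [critNumerator, hN.deriv]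

-- the derivative of `critNumerator (a * b)` at its zeros
lemma mul_secondDeriv_sub_deriv_neg {t a a₁ a₂ b b₁ b₂ : ℝ} (ht : 0 < t) (ha : 0 < a)
    (ha₁ : a₁ ≤ 0) (ha₂ : t * a₂ ≤ -2 * a₁) (hb : 0 < b) (hb₁ : 0 ≤ b₁) (hb₂ : b₂ < 0)
    (hcrit : t * (a₁ * b + a * b₁) - 2 * (a * b) = 0) :
    t * (a₂ * b + 2 * (a₁ * b₁) + a * b₂) - (a₁ * b + a * b₁) < 0 := by
  have h₁ : t * a₂ * (a * b) ≤ -2 * a₁ * (a * b) :=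
    mul_le_mul_of_nonneg_right ha₂ (mul_pos ha hb).le
  have h₂ : 2 * t * a * a₁ * b₁ = 4 * a * a₁ * b - 2 * t * a₁ ^ 2 * b := by
    linear_combination 2 * a₁ * hcrit
  have h₃ : t * a ^ 2 * b₂ < 0 := mul_neg_of_pos_of_neg (by positivity) hb₂
  have h₄ : a * a₁ * b ≤ 0 :=
    mul_nonpos_of_nonpos_of_nonneg (mul_nonpos_of_nonneg_of_nonpos ha.le ha₁) hb.le
  have h₅ : 0 ≤ t * a₁ ^ 2 * b := by positivity
  have h₆ : 0 ≤ a ^ 2 * b₁ := by positivity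
  refine neg_of_mul_neg_right (a := a) ?_ ha.le
  linarith

lemma exists_hasDerivAt_critNumerator_mul {a b a₁ b₁ : ℝ → ℝ} {a₂ b₂ t : ℝ} (ht : 0 < t)
    (ha : ∀ᶠ s in 𝓝 t, HasDerivAt a (a₁ s) s) (ha₁ : HasDerivAt a₁ a₂ t)
    (hb : ∀ᶠ s in 𝓝 t, HasDerivAt b (b₁ s) s) (hb₁ : HasDerivAt b₁ b₂ t)
    (ha₀ : 0 < a t) (ha₁₀ : a₁ t ≤ 0) (ha₂₀ : t * a₂ ≤ -2 * a₁ t)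
    (hb₀ : 0 < b t) (hb₁₀ : 0 ≤ b₁ t) (hb₂₀ : b₂ < 0) :
    ∃ g, HasDerivAt (critNumerator (a * b)) g t ∧ (critNumerator (a * b) t = 0 → g < 0) := by
  have hab : ∀ᶠ s in 𝓝 t, HasDerivAt (a * b) (a₁ s * b s + a s * b₁ s) s :=
    (ha.and hb).mono fun s h => h.1.mul h.2
  have hab₁ : HasDerivAt (fun s => a₁ s * b s + a s * b₁ s)
      (a₂ * b t + 2 * (a₁ t * b₁ t) + a t * b₂) t :=
    ((ha₁.mul hb.self_of_nhds).add (ha.self_of_nhds.mul hb₁)).congr_deriv (by ring)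
  refine ⟨_, hasDerivAt_critNumerator hab hab₁, fun hcrit => ?_⟩
  rw [critNumerator_eq hab.self_of_nhds] at hcrit
  exact mul_secondDeriv_sub_deriv_neg ht ha₀ ha₁₀ ha₂₀ hb₀ hb₁₀ hb₂₀ hcrit

lemma exists_hasDerivAt_critNumerator_gaussianQ_mul {u v u₁ v₁ : ℝ → ℝ} {u₂ v₂ t : ℝ}
    (ht : 0 < t) (hu : ∀ᶠ s in 𝓝 t, HasDerivAt u (u₁ s) s) (hu₁ : HasDerivAt u₁ u₂ t)
    (hv : ∀ᶠ s in 𝓝 t, HasDerivAt v (v₁ s) s) (hv₁ : HasDerivAt v₁ v₂ t)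
    (hu₀ : u t ≤ 0) (hu₁₀ : 0 ≤ u₁ t) (hu₂₀ : -(t * u₂) ≤ 2 * u₁ t)
    (hv₀ : 0 ≤ v t) (hv₁₀ : 0 ≤ v₁ t) (hv₂₀ : v₂ < 0) :
    ∃ g, HasDerivAt (critNumerator fun s => gaussianQ (u s) * (1 - gaussianQ (v s))) g t ∧
      (critNumerator (fun s => gaussianQ (u s) * (1 - gaussianQ (v s))) t = 0 → g < 0) := by
  have hφu := gaussianPDFReal_pos 0 1 (u t) one_ne_zero
  have hφv := gaussianPDFReal_pos 0 1 (v t) one_ne_zero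
  refine exists_hasDerivAt_critNumerator_mul (a := fun s => gaussianQ (u s))
    (b := fun s => 1 - gaussianQ (v s)) ht (hu.mono fun s h => h.gaussianQ_comp)
    (hu.self_of_nhds.gaussianPDFReal_comp_mul hu₁).neg
    (hv.mono fun s h => h.gaussianQ_comp.const_sub 1 |>.congr_deriv (neg_neg _))
    (hv.self_of_nhds.gaussianPDFReal_comp_mul hv₁)
    (gaussianQ_pos _) ?_ ?_ (sub_pos.2 (gaussianQ_lt_one _)) (by positivity) ?_
  · exact neg_nonpos.2 (by positivity)
  · have : t * (u t * u₁ t ^ 2) ≤ 0 :=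
      mul_nonpos_of_nonneg_of_nonpos ht.le (mul_nonpos_of_nonpos_of_nonneg hu₀ (sq_nonneg _))
    nlinarith
  · exact mul_neg_of_pos_of_neg hφv (by nlinarith [sq_nonneg (v₁ t)])

section Exponent

variable {κ C d t : ℝ}

lemma hasDerivAt_mul_sub_div (ht : t ≠ 0) :
    HasDerivAt (fun t => κ * (C * t - d / t)) (κ * (C + d / t ^ 2)) t :=
  (((hasDerivAt_id t).const_mul C).sub ((hasDerivAt_inv ht).const_mul d)).const_mul κ
    |>.congr_deriv (by simp only [div_eq_mul_inv]; ring)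

lemma hasDerivAt_mul_add_div_sq (ht : t ≠ 0) :
    HasDerivAt (fun t => κ * (C + d / t ^ 2)) (κ * (-2 * d / t ^ 3)) t :=
  (((hasDerivAt_pow 2 t).inv (pow_ne_zero 2 ht)).const_mul d).const_add C |>.const_mul κ
    |>.congr_deriv (by field_simp; ring)

lemma mul_sub_div_nonneg (hκ : 0 ≤ κ) (hC : 0 < C) (ht : 0 < t) (h : d / C ≤ t ^ 2) :
    0 ≤ κ * (C * t - d / t) := by
  rw [div_le_iff₀ hC] at h
  exact mul_nonneg hκ (sub_nonneg.2 ((div_le_iff₀ ht).2 (by nlinarith)))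

lemma mul_sub_div_nonpos (hκ : 0 ≤ κ) (hC : 0 < C) (ht : 0 < t) (h : t ^ 2 ≤ d / C) :
    κ * (C * t - d / t) ≤ 0 := by
  rw [le_div_iff₀ hC] at h
  exact mul_nonpos_of_nonneg_of_nonpos hκ (sub_nonpos.2 ((le_div_iff₀ ht).2 (by nlinarith)))

end Exponent

lemma Cap_pos {γ : ℝ} (hγ : 0 < γ) : 0 < Cap γ :=
  Real.logb_pos one_lt_two (by linarith)

lemma Vdisp_pos {γ : ℝ} (hγ : 0 < γ) : 0 < Vdisp γ := by
  rw [Vdisp, sub_pos]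
  exact inv_lt_one_of_one_lt₀ (by nlinarith)

noncomputable def ωsqrt (d γ t : ℝ) : ℝ := Real.log 2 / √(Vdisp γ) * (Cap γ * t - d / t)

lemma ωfbl_eq_ωsqrt {d γ m : ℝ} (hγ : 0 < γ) (hm : 0 < m) : ωfbl d γ m = ωsqrt d γ √m := by
  obtain ⟨s, hs, rfl⟩ : ∃ s, 0 < s ∧ s ^ 2 = m := ⟨√m, Real.sqrt_pos.2 hm, Real.sq_sqrt hm.le⟩
  rw [ωfbl, ωsqrt, Real.sqrt_div' _ (Vdisp_pos hγ).le, Real.sqrt_sq hs.le]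
  field_simp

lemma hasDerivAt_div_mul_comp_sqrt {N : ℝ → ℝ} {d m : ℝ} (hm : 0 < m)
    (hN : DifferentiableAt ℝ N √m) :
    HasDerivAt (fun m => d / m * N √m) (critNumerator N √m * (d / (2 * m ^ 2))) m := by
  have hNs := hN.hasDerivAt.comp m (Real.hasDerivAt_sqrt hm.ne')
  refine (((hasDerivAt_inv hm.ne').const_mul d).mul hNs).congr_deriv ?_
  rw [critNumerator]
  obtain ⟨s, hs, rfl⟩ : ∃ s, 0 < s ∧ s ^ 2 = m := ⟨√m, Real.sqrt_pos.2 hm, Real.sq_sqrt hm.le⟩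
  simp only [Real.sqrt_sq hs.le, Function.comp_apply]
  field_simp
  ring

lemma lt_zero_of_lt_zero_of_deriv_neg_at_zeros {G : ℝ → ℝ} {s u : ℝ} (hsu : s ≤ u)
    (hG : ∀ x ∈ Icc s u, ∃ g, HasDerivAt G g x ∧ (G x = 0 → g < 0)) (hs : G s < 0) :
    G u < 0 := by
  by_contra! hu
  have hcont : ContinuousOn G (Icc s u) := fun x hx =>
    (hG x hx).choose_spec.1.continuousAt.continuousWithinAt
  set B := {x ∈ Icc s u | 0 ≤ G x}
  have hB : IsClosed B := hcont.preimage_isClosed_of_isClosed isClosed_Icc isClosed_Ici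
  have hBbdd : BddBelow B := ⟨s, fun x hx => hx.1.1⟩
  set z := sInf B
  obtain ⟨⟨hsz, hzu⟩, hGz⟩ : z ∈ B := hB.csInf_mem ⟨u, ⟨hsu, le_rfl⟩, hu⟩ hBbdd
  have hsz' : s < z := hsz.lt_of_ne fun h => by rw [← h] at hGz; linarith
  -- `z` is the first point with `0 ≤ G z`; reached through negative values, `G z = 0 ≤ G' z`.
  have hneg : ∀ᶠ y in 𝓝[<] z, G y < 0 := by
    filter_upwards [Ioo_mem_nhdsLT hsz'] with y hy
    by_contra! hy'
    exact (csInf_le hBbdd ⟨⟨hy.1.le, hy.2.le.trans hzu⟩, hy'⟩).not_gt hy.2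
  obtain ⟨g, hGg, hg⟩ := hG z ⟨hsz, hzu⟩
  have hGz0 : G z = 0 :=
    le_antisymm (le_of_tendsto (hGg.continuousAt.tendsto.mono_left nhdsWithin_le_nhds)
      (hneg.mono fun y hy => hy.le)) hGz
  have hg₀ : 0 ≤ g := by
    refine ge_of_tendsto ((hasDerivAt_iff_tendsto_slope_left_right.1 hGg).1) ?_
    filter_upwards [hneg, self_mem_nhdsWithin] with y hy hyz
    rw [slope_comm]
    exact (slope_nonneg_iff_of_le (le_of_lt hyz)).2 (by linarith)
  exact (hg hGz0).not_ge hg₀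

lemma quasiconcaveOn_Icc_of_deriv_stays_neg {f f' : ℝ → ℝ} {a b : ℝ}
    (hf : ContinuousOn f (Icc a b)) (hf' : ∀ x ∈ Ioo a b, HasDerivAt f (f' x) x)
    (hsign : ∀ x ∈ Ioo a b, ∀ y ∈ Ioo a b, x < y → f' x < 0 → f' y < 0) :
    QuasiconcaveOn ℝ (Icc a b) f := by
  refine fun r => convex_iff_ordConnected.2 ⟨?_⟩
  rintro x ⟨hx, hrx⟩ y ⟨hy, hry⟩ z ⟨hxz, hzy⟩
  have hz : z ∈ Icc a b := ⟨hx.1.trans hxz, hzy.trans hy.2⟩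
  refine ⟨hz, ?_⟩
  by_cases h : ∀ w ∈ Ioo x z, 0 ≤ f' w
  · have hmono : MonotoneOn f (Icc x z) := by
      refine monotoneOn_of_hasDerivWithinAt_nonneg (f' := f') (convex_Icc x z)
        (hf.mono (Icc_subset_Icc hx.1 hz.2)) (fun v hv => ?_) (fun v hv => ?_) <;>
        rw [interior_Icc] at hv
      · exact (hf' v ⟨hx.1.trans_lt hv.1, hv.2.trans_le hz.2⟩).hasDerivWithinAt
      · exact h v hv
    exact hrx.trans (hmono ⟨le_rfl, hxz⟩ ⟨hxz, le_rfl⟩ hxz)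
  · simp only [not_forall, not_le] at h
    obtain ⟨w, hw, hw'⟩ := h
    have hanti : AntitoneOn f (Icc z y) := by
      refine antitoneOn_of_hasDerivWithinAt_nonpos (f' := f') (convex_Icc z y)
        (hf.mono (Icc_subset_Icc hz.1 hy.2)) (fun v hv => ?_) (fun v hv => ?_) <;>
        rw [interior_Icc] at hv
      · exact (hf' v ⟨hz.1.trans_lt hv.1, hv.2.trans_le hy.2⟩).hasDerivWithinAt
      · exact (hsign w ⟨hx.1.trans_lt hw.1, hw.2.trans_le hz.2⟩ v
          ⟨hz.1.trans_lt hv.1, hv.2.trans_le hy.2⟩ (hw.2.trans hv.1) hw').le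
    exact hry.trans (hanti ⟨le_rfl, hzy⟩ ⟨hzy, le_rfl⟩ hzy)

-- `1 - ε_LF` at blocklength `t ^ 2`
noncomputable def secrecySuccess (d γb γe t : ℝ) : ℝ :=
  gaussianQ (ωsqrt d γe t) * (1 - gaussianQ (ωsqrt d γb t))

section SecrecyThroughput

variable {d γb γe : ℝ}

lemma differentiableAt_secrecySuccess {t : ℝ} (ht : t ≠ 0) :
    DifferentiableAt ℝ (secrecySuccess d γb γe) t :=
  ((hasDerivAt_mul_sub_div ht).gaussianQ_comp.mul
    ((hasDerivAt_mul_sub_div ht).gaussianQ_comp.const_sub 1)).differentiableAt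

lemma exists_hasDerivAt_critNumerator_secrecySuccess (hd : 0 < d) (hγb : 0 < γb)
    (hγe : 0 < γe) {t : ℝ} (ht : 0 < t) (hb : d / Cap γb ≤ t ^ 2) (he : t ^ 2 ≤ d / Cap γe) :
    ∃ g, HasDerivAt (critNumerator (secrecySuccess d γb γe)) g t ∧
      (critNumerator (secrecySuccess d γb γe) t = 0 → g < 0) := by
  have hκ : ∀ γ, 0 < γ → 0 < Real.log 2 / √(Vdisp γ) := fun γ hγ =>
    div_pos (Real.log_pos one_lt_two) (Real.sqrt_pos.2 (Vdisp_pos hγ))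
  have hκe := hκ γe hγe
  have hCe := Cap_pos hγe
  have hne : ∀ᶠ s in 𝓝 t, s ≠ 0 := eventually_ne_nhds ht.ne'
  refine exists_hasDerivAt_critNumerator_gaussianQ_mul (u := ωsqrt d γe) (v := ωsqrt d γb) ht
    (hne.mono fun s hs => hasDerivAt_mul_sub_div hs) (hasDerivAt_mul_add_div_sq ht.ne')
    (hne.mono fun s hs => hasDerivAt_mul_sub_div hs) (hasDerivAt_mul_add_div_sq ht.ne')
    (mul_sub_div_nonpos hκe.le hCe ht he) (by positivity) ?_
    (mul_sub_div_nonneg (hκ γb hγb).le (Cap_pos hγb) ht hb) (by have := Cap_pos hγb; positivity)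
    (mul_neg_of_pos_of_neg (hκ γb hγb) (div_neg_of_neg_of_pos (by linarith) (by positivity)))
  have h : -(t * (Real.log 2 / √(Vdisp γe) * (-2 * d / t ^ 3)))
      = 2 * (Real.log 2 / √(Vdisp γe) * (d / t ^ 2)) := by
    field_simp
  rw [h]
  gcongr
  exact le_add_of_nonneg_left hCe.le

lemma hasDerivAt_secrecyThroughput (hγb : 0 < γb) (hγe : 0 < γe) {m : ℝ} (hm : 0 < m) :
    HasDerivAt (fun m => d / m *
        (1 - (gaussianQ (ωfbl d γb m) * gaussianQ (ωfbl d γe m) + (1 - gaussianQ (ωfbl d γe m)))))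
      (critNumerator (secrecySuccess d γb γe) √m * (d / (2 * m ^ 2))) m := by
  refine (hasDerivAt_div_mul_comp_sqrt hm
    (differentiableAt_secrecySuccess (Real.sqrt_pos.2 hm).ne')).congr_of_eventuallyEq ?_
  filter_upwards [Ioi_mem_nhds hm] with x hx
  rw [ωfbl_eq_ωsqrt hγb hx, ωfbl_eq_ωsqrt hγe hx, secrecySuccess]
  ring

end SecrecyThroughput

/-- paper's Corollary 2: for packet size `d > 0` and SNRs
`γ_b > γ_e > 0`, the secrecy effective throughput `τ_LF(m) = (d/m)·(1 − ε_LF(m))`,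
where `ε_LF(m) = Q(ω_b(m))·Q(ω_e(m)) + (1 − Q(ω_e(m)))`, is quasiconcave in the
blocklength `m` on `[d / C(γ_b), d / C(γ_e)]`. -/
theorem statement16 (d γb γe : ℝ) (hd : 0 < d) (hγe : 0 < γe) (hγ : γe < γb) :
    QuasiconcaveOn ℝ (Set.Icc (d / Cap γb) (d / Cap γe))
      (fun m => d / m *
        (1 - (gaussianQ (ωfbl d γb m) * gaussianQ (ωfbl d γe m) +
          (1 - gaussianQ (ωfbl d γe m))))) := by
  have hγb : 0 < γb := hγe.trans hγ
  have hm₀ : 0 < d / Cap γb := div_pos hd (Cap_pos hγb)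
  have hfactor : ∀ m, 0 < m → 0 < d / (2 * m ^ 2) := fun m _ => by positivity
  refine quasiconcaveOn_Icc_of_deriv_stays_neg
    (fun m hm =>
      (hasDerivAt_secrecyThroughput hγb hγe (hm₀.trans_le hm.1)).continuousAt.continuousWithinAt)
    (fun m hm => hasDerivAt_secrecyThroughput hγb hγe (hm₀.trans hm.1))
    fun x hx y hy hxy hfx => mul_neg_of_neg_of_pos ?_ (hfactor y (hm₀.trans hy.1))
  refine lt_zero_of_lt_zero_of_deriv_neg_at_zeros (Real.sqrt_le_sqrt hxy.le) (fun t ht => ?_)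
    (neg_of_mul_neg_left hfx (hfactor x (hm₀.trans hx.1)).le)
  have ht₀ : 0 < t := (Real.sqrt_pos.2 (hm₀.trans hx.1)).trans_le ht.1
  exact exists_hasDerivAt_critNumerator_secrecySuccess hd hγb hγe ht₀
    (hx.1.le.trans ((Real.sqrt_le_left ht₀.le).1 ht.1))
    (((Real.le_sqrt ht₀.le (hm₀.trans hy.1).le).1 ht.2).trans hy.2.le)
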